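/- For any n×n complex matrices A, B and any matrix X, and for every j: s_j(A X B*) ≤ ‖X‖ · s_j(A ⊕ B)², where ‖X‖ is the operator norm. -/

import Mathlib

open Matrix
open scoped ComplexOrder

/-- The `j`-th largest singular value of a square complex matrix (`j : Fin m`, zero-indexed,
so `sv A 0` is the largest singular value). It is defined as the square root of the `j`-th
largest eigenvalue of `Aᴴ * A`. -/
noncomputable def sv {m : ℕ} (A : Matrix (Fin m) (Fin m) ℂ) (j : Fin m) : ℝ :=
  Real.sqrt ((Matrix.isHermitian_conjTranspose_mul_self A).eigenvalues
    (Tuple.sort ((Matrix.isHermitian_conjTranspose_mul_self A).eigenvalues) j.rev))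

/-- The positive semidefinite square root of a positive semidefinite matrix (the former
Mathlib definition `Matrix.PosSemidef.sqrt`, spelled out). -/
noncomputable def psdSqrt {m : ℕ} {P : Matrix (Fin m) (Fin m) ℂ} (hA : P.PosSemidef) :
    Matrix (Fin m) (Fin m) ℂ :=
  hA.1.eigenvectorUnitary.1 * diagonal ((↑) ∘ (√·) ∘ hA.1.eigenvalues) *
    (star hA.1.eigenvectorUnitary : Matrix (Fin m) (Fin m) ℂ)

theorem psdSqrt_isHermitian {m : ℕ} {P : Matrix (Fin m) (Fin m) ℂ} (hA : P.PosSemidef) :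
    (psdSqrt hA).IsHermitian := by
  unfold psdSqrt
  unfold Matrix.IsHermitian
  rw [conjTranspose_mul, conjTranspose_mul, diagonal_conjTranspose]
  have h : star (Complex.ofReal ∘ (√·) ∘ hA.1.eigenvalues) =
      Complex.ofReal ∘ (√·) ∘ hA.1.eigenvalues := by
    funext i
    exact Complex.conj_ofReal _
  simp only [h, Matrix.star_eq_conjTranspose, conjTranspose_conjTranspose, Matrix.mul_assoc]

/-- The absolute value `|A| = (Aᴴ A)^{1/2}` of a square complex matrix. -/
noncomputable def matAbs {m : ℕ} (A : Matrix (Fin m) (Fin m) ℂ) : Matrix (Fin m) (Fin m) ℂ :=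
  psdSqrt (Matrix.posSemidef_conjTranspose_mul_self A)

/-- The `2n × 2n` block matrix `[[A, B], [C, D]]`, reindexed by `Fin (n + n)`. -/
noncomputable def blk {n : ℕ} (A B C D : Matrix (Fin n) (Fin n) ℂ) :
    Matrix (Fin (n + n)) (Fin (n + n)) ℂ :=
  Matrix.reindex finSumFinEquiv finSumFinEquiv (Matrix.fromBlocks A B C D)

/-- `f(P)` for a Hermitian matrix `P`, via the spectral functional calculus. -/
noncomputable def herCfc {m : ℕ} {P : Matrix (Fin m) (Fin m) ℂ} (hP : P.IsHermitian)
    (f : ℝ → ℝ) : Matrix (Fin m) (Fin m) ℂ :=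
  hP.cfc f

/-- `|A| ^ r` (real power of the absolute value), via the functional calculus. -/
noncomputable def matAbsPow {m : ℕ} (A : Matrix (Fin m) (Fin m) ℂ) (r : ℝ) :
    Matrix (Fin m) (Fin m) ℂ :=
  herCfc (psdSqrt_isHermitian (Matrix.posSemidef_conjTranspose_mul_self A)) (fun t => t ^ r)

/-- `f(|A|)`, via the functional calculus. -/
noncomputable def matAbsCfc {m : ℕ} (A : Matrix (Fin m) (Fin m) ℂ) (f : ℝ → ℝ) :
    Matrix (Fin m) (Fin m) ℂ :=
  herCfc (psdSqrt_isHermitian (Matrix.posSemidef_conjTranspose_mul_self A)) f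

/-- The operator norm: the largest singular value. -/
noncomputable def opNorm {m : ℕ} (A : Matrix (Fin m) (Fin m) ℂ) : ℝ :=
  ⨆ j, sv A j

/-!
Singular values satisfy Horn's inequality `s_{i+k}(MN) ≤ s_i(M) s_k(N)`, a consequence of the
min-max description: `s_j(C)` is the least `c` with `‖Cx‖ ≤ c‖x‖` on some subspace of
codimension `j`. The squared singular values of `A ⊕ B` are those of `A` and of `B` taken
together, so counting the ones that exceed `c = s_j(A ⊕ B)` gives `i + k = j` with
`s_i(A) ≤ c` and `s_k(B) ≤ c`. Hence `s_j(AXB*) ≤ s_i(A) s_0(X) s_k(B*) ≤ ‖X‖ c²`, where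
`s_k(B*) = s_k(B)` because `B*B` and `BB*` have the same characteristic polynomial.
-/

open Finset
open scoped InnerProductSpace

theorem exists_add_eq_le_of_map_eq_add {α : Type*} [LinearOrder α] {n : ℕ}
    {u : Fin (n + n) → α} {a b : Fin n → α} (hu : Antitone u) (ha : Antitone a)
    (hb : Antitone b) (h : univ.val.map u = univ.val.map a + univ.val.map b) (j : Fin n) :
    ∃ i k : Fin n, i.val + k.val = j.val ∧ a i ≤ u (Fin.castAdd n j) ∧
      b k ≤ u (Fin.castAdd n j) := by
  set t := u (Fin.castAdd n j)
  have card_eq {m : ℕ} (f : Fin m → α) :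
      #{x | t < f x} = Multiset.countP (t < ·) (univ.val.map f) := by
    rw [Multiset.countP_map]; rfl
  -- the entries of `a` and `b` above `t` are those of `u`, and `u` has at most `j` of them
  have hcard : #{x | t < a x} + #{x | t < b x} ≤ j := by
    rw [card_eq, card_eq, ← Multiset.countP_add, ← h, ← card_eq]
    by_contra! hlt
    exact lt_irrefl t ((Tuple.lt_card_gt_iff_apply_gt_of_antitone hu).1 hlt)
  obtain ⟨P, hP⟩ : ∃ P, #{x | t < a x} = P := ⟨_, rfl⟩
  rw [hP] at hcard
  refine ⟨⟨P, by omega⟩, ⟨j - P, by omega⟩, Nat.add_sub_of_le (show P ≤ j by omega), ?_, ?_⟩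
  · refine not_lt.1 fun hlt => lt_irrefl P ?_
    exact hP ▸ (Tuple.lt_card_gt_iff_apply_gt_of_antitone ha).2 hlt
  · refine not_lt.1 fun hlt => ?_
    have : j - P < #{x | t < b x} := (Tuple.lt_card_gt_iff_apply_gt_of_antitone hb).2 hlt
    omega

theorem OrthonormalBasis.inner_eq_zero_of_mem_span_image {ι 𝕜 E : Type*} [Fintype ι] [RCLike 𝕜]
    [NormedAddCommGroup E] [InnerProductSpace 𝕜 E] (b : OrthonormalBasis ι 𝕜 E) {S : Set ι}
    {x : E} (hx : x ∈ Submodule.span 𝕜 (b '' S)) {i : ι} (hi : i ∉ S) : ⟪b i, x⟫_𝕜 = 0 := by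
  induction hx using Submodule.span_induction with
  | mem y hy =>
    obtain ⟨k, hk, rfl⟩ := hy
    exact b.orthonormal.inner_eq_zero (ne_of_mem_of_not_mem hk hi).symm
  | zero => exact inner_zero_right _
  | add y z _ _ hy hz => rw [inner_add_right, hy, hz, add_zero]
  | smul c y _ hy => rw [inner_smul_right, hy, mul_zero]

theorem OrthonormalBasis.finrank_span_image {ι 𝕜 E : Type*} [Fintype ι] [RCLike 𝕜]
    [NormedAddCommGroup E] [InnerProductSpace 𝕜 E] (b : OrthonormalBasis ι 𝕜 E) (S : Finset ι) :
    Module.finrank 𝕜 (Submodule.span 𝕜 (b '' S)) = #S := by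
  have hli : LinearIndependent 𝕜 fun k : (S : Set ι) => b k :=
    b.orthonormal.linearIndependent.comp _ Subtype.val_injective
  rw [Set.image_eq_range, finrank_span_eq_card hli]
  simp

theorem finrank_add_le_finrank_inf_add {K E : Type*} [DivisionRing K] [AddCommGroup E]
    [Module K E] [FiniteDimensional K E] (V W : Submodule K E) :
    Module.finrank K V + Module.finrank K W ≤
      Module.finrank K ↥(V ⊓ W) + Module.finrank K E := by
  rw [← Submodule.finrank_sup_add_finrank_inf_eq, add_comm]
  exact Nat.add_le_add_left (Submodule.finrank_le _) _

theorem finrank_le_finrank_comap {K E : Type*} [DivisionRing K] [AddCommGroup E]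
    [Module K E] [FiniteDimensional K E] (f : E →ₗ[K] E) (W : Submodule K E) :
    Module.finrank K W ≤ Module.finrank K (W.comap f) := by
  have h1 := LinearMap.finrank_range_add_finrank_ker (W.mkQ ∘ₗ f)
  have h2 := (W.mkQ ∘ₗ f).range.finrank_le
  have h3 := W.finrank_quotient_add_finrank
  rw [LinearMap.ker_comp, Submodule.ker_mkQ] at h1
  omega

section SingularValues

variable {m : ℕ}

noncomputable abbrev gramEigenvalues (C : Matrix (Fin m) (Fin m) ℂ) : Fin m → ℝ :=
  (isHermitian_conjTranspose_mul_self C).eigenvalues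

noncomputable abbrev gramEigenbasis (C : Matrix (Fin m) (Fin m) ℂ) :
    OrthonormalBasis (Fin m) ℂ (EuclideanSpace ℂ (Fin m)) :=
  (isHermitian_conjTranspose_mul_self C).eigenvectorBasis

theorem sv_nonneg (C : Matrix (Fin m) (Fin m) ℂ) (j : Fin m) : 0 ≤ sv C j :=
  Real.sqrt_nonneg _

theorem sq_sv (C : Matrix (Fin m) (Fin m) ℂ) (j : Fin m) :
    sv C j ^ 2 = gramEigenvalues C (Tuple.sort (gramEigenvalues C) j.rev) :=
  Real.sq_sqrt ((posSemidef_conjTranspose_mul_self C).eigenvalues_nonneg _)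

theorem sv_antitone (C : Matrix (Fin m) (Fin m) ℂ) : Antitone (sv C) := fun _ _ hij =>
  Real.sqrt_le_sqrt (Tuple.monotone_sort (gramEigenvalues C) (Fin.rev_le_rev.2 hij))

theorem sv_le_opNorm (C : Matrix (Fin m) (Fin m) ℂ) (j : Fin m) : sv C j ≤ opNorm C :=
  le_ciSup (Set.finite_range _).bddAbove j

theorem map_sv (C : Matrix (Fin m) (Fin m) ℂ) :
    univ.val.map (sv C) = univ.val.map (Real.sqrt ∘ gramEigenvalues C) := by
  have hsv : sv C = (Real.sqrt ∘ gramEigenvalues C) ∘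
      (Fin.revPerm.trans (Tuple.sort (gramEigenvalues C))) := rfl
  rw [hsv, ← Multiset.map_map, Multiset.map_univ_val_equiv]

theorem sv_eq_of_charpoly_eq {C D : Matrix (Fin m) (Fin m) ℂ}
    (h : (Cᴴ * C).charpoly = (Dᴴ * D).charpoly) : sv C = sv D := by
  have heig : gramEigenvalues C = gramEigenvalues D :=
    (IsHermitian.eigenvalues_eq_eigenvalues_iff _ _).2 h
  funext j
  simp only [sv, heig]

theorem sv_conjTranspose (C : Matrix (Fin m) (Fin m) ℂ) : sv Cᴴ = sv C :=
  sv_eq_of_charpoly_eq (by rw [conjTranspose_conjTranspose, charpoly_mul_comm])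

theorem map_gramEigenvalues_eq_of_charpoly_eq_mul {n p : ℕ} {C : Matrix (Fin m) (Fin m) ℂ}
    {D : Matrix (Fin n) (Fin n) ℂ} {E : Matrix (Fin p) (Fin p) ℂ}
    (h : (Cᴴ * C).charpoly = (Dᴴ * D).charpoly * (Eᴴ * E).charpoly) :
    univ.val.map (gramEigenvalues C) =
      univ.val.map (gramEigenvalues D) + univ.val.map (gramEigenvalues E) := by
  have hroots := congrArg Polynomial.roots h
  rw [Polynomial.roots_mul ((charpoly_monic _).mul (charpoly_monic _)).ne_zero,
    (isHermitian_conjTranspose_mul_self C).roots_charpoly_eq_eigenvalues,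
    (isHermitian_conjTranspose_mul_self D).roots_charpoly_eq_eigenvalues,
    (isHermitian_conjTranspose_mul_self E).roots_charpoly_eq_eigenvalues,
    ← Multiset.map_map, ← Multiset.map_map, ← Multiset.map_map, ← Multiset.map_add] at hroots
  exact Multiset.map_injective RCLike.ofReal_injective hroots

theorem map_sv_eq_of_charpoly_eq_mul {n p : ℕ} {C : Matrix (Fin m) (Fin m) ℂ}
    {D : Matrix (Fin n) (Fin n) ℂ} {E : Matrix (Fin p) (Fin p) ℂ}
    (h : (Cᴴ * C).charpoly = (Dᴴ * D).charpoly * (Eᴴ * E).charpoly) :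
    univ.val.map (sv C) = univ.val.map (sv D) + univ.val.map (sv E) := by
  rw [map_sv, map_sv, map_sv, ← Multiset.map_map, ← Multiset.map_map, ← Multiset.map_map,
    map_gramEigenvalues_eq_of_charpoly_eq_mul h, Multiset.map_add]

theorem toEuclideanLin_mul_apply (M N : Matrix (Fin m) (Fin m) ℂ)
    (x : EuclideanSpace ℂ (Fin m)) :
    toEuclideanLin (M * N) x = toEuclideanLin M (toEuclideanLin N x) := by
  simp

theorem inner_gramEigenbasis_gram (C : Matrix (Fin m) (Fin m) ℂ) (x : EuclideanSpace ℂ (Fin m))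
    (i : Fin m) :
    ⟪gramEigenbasis C i, toEuclideanLin (Cᴴ * C) x⟫_ℂ =
      gramEigenvalues C i * ⟪gramEigenbasis C i, x⟫_ℂ := by
  simp only [← OrthonormalBasis.repr_apply_apply, IsHermitian.eigenvectorBasis,
    OrthonormalBasis.repr_reindex, IsHermitian.eigenvalues, IsHermitian.eigenvalues₀]
  exact LinearMap.IsSymmetric.eigenvectorBasis_apply_self_apply _ _ _ _

theorem norm_toEuclideanLin_sq (C : Matrix (Fin m) (Fin m) ℂ) (x : EuclideanSpace ℂ (Fin m)) :
    ‖toEuclideanLin C x‖ ^ 2 = ∑ i, gramEigenvalues C i * ‖⟪gramEigenbasis C i, x⟫_ℂ‖ ^ 2 := by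
  have hgram :
      ⟪toEuclideanLin C x, toEuclideanLin C x⟫_ℂ = ⟪x, toEuclideanLin (Cᴴ * C) x⟫_ℂ := by
    rw [toEuclideanLin_mul_apply, toEuclideanLin_conjTranspose_eq_adjoint,
      LinearMap.adjoint_inner_right]
  rw [@norm_sq_eq_re_inner ℂ, hgram, ← (gramEigenbasis C).sum_inner_mul_inner, map_sum]
  refine sum_congr rfl fun i _ => ?_
  rw [inner_gramEigenbasis_gram, ← inner_conj_symm x, mul_left_comm, Complex.conj_mul']
  norm_cast

theorem norm_toEuclideanLin_le_of_mem_span (C : Matrix (Fin m) (Fin m) ℂ) {S : Finset (Fin m)}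
    {t : ℝ} (ht : 0 ≤ t) (hS : ∀ i ∈ S, gramEigenvalues C i ≤ t ^ 2)
    {x : EuclideanSpace ℂ (Fin m)} (hx : x ∈ Submodule.span ℂ (gramEigenbasis C '' S)) :
    ‖toEuclideanLin C x‖ ≤ t * ‖x‖ := by
  refine le_of_pow_le_pow_left₀ two_ne_zero (by positivity) ?_
  rw [norm_toEuclideanLin_sq, mul_pow, ← (gramEigenbasis C).sum_sq_norm_inner_right x, mul_sum]
  refine sum_le_sum fun i _ => ?_
  by_cases hi : i ∈ S
  · exact mul_le_mul_of_nonneg_right (hS i hi) (sq_nonneg _)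
  · simp [(gramEigenbasis C).inner_eq_zero_of_mem_span_image hx hi]

theorem le_norm_toEuclideanLin_of_mem_span (C : Matrix (Fin m) (Fin m) ℂ) {S : Finset (Fin m)}
    {t : ℝ} (hS : ∀ i ∈ S, t ^ 2 ≤ gramEigenvalues C i)
    {x : EuclideanSpace ℂ (Fin m)} (hx : x ∈ Submodule.span ℂ (gramEigenbasis C '' S)) :
    t * ‖x‖ ≤ ‖toEuclideanLin C x‖ := by
  refine le_of_pow_le_pow_left₀ two_ne_zero (norm_nonneg _) ?_
  rw [norm_toEuclideanLin_sq, mul_pow, ← (gramEigenbasis C).sum_sq_norm_inner_right x, mul_sum]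
  refine sum_le_sum fun i _ => ?_
  by_cases hi : i ∈ S
  · exact mul_le_mul_of_nonneg_right (hS i hi) (sq_nonneg _)
  · simp [(gramEigenbasis C).inner_eq_zero_of_mem_span_image hx hi]

theorem exists_finrank_le_norm_le_sv (C : Matrix (Fin m) (Fin m) ℂ) (j : Fin m) :
    ∃ V : Submodule ℂ (EuclideanSpace ℂ (Fin m)), m - j ≤ Module.finrank ℂ V ∧
      ∀ x ∈ V, ‖toEuclideanLin C x‖ ≤ sv C j * ‖x‖ := by
  set σ := Tuple.sort (gramEigenvalues C)
  refine ⟨Submodule.span ℂ (gramEigenbasis C '' ((Iic j.rev).image σ)), ?_, fun x hx => ?_⟩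
  · rw [OrthonormalBasis.finrank_span_image, card_image_of_injective _ σ.injective,
      Fin.card_Iic, Fin.val_rev]
    omega
  · refine norm_toEuclideanLin_le_of_mem_span C (sv_nonneg C j) (fun i hi => ?_) hx
    obtain ⟨p, hp, rfl⟩ := mem_image.1 hi
    rw [sq_sv]
    exact Tuple.monotone_sort (gramEigenvalues C) (mem_Iic.1 hp)

theorem sv_le_of_forall_norm_le (C : Matrix (Fin m) (Fin m) ℂ) (j : Fin m) {c : ℝ}
    (V : Submodule ℂ (EuclideanSpace ℂ (Fin m))) (hV : m - j ≤ Module.finrank ℂ V)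
    (hc : ∀ x ∈ V, ‖toEuclideanLin C x‖ ≤ c * ‖x‖) : sv C j ≤ c := by
  set σ := Tuple.sort (gramEigenvalues C)
  -- `V` meets the span of the eigenvectors of the `j + 1` largest eigenvalues of `Cᴴ * C`
  set W := Submodule.span ℂ (gramEigenbasis C '' ((Ici j.rev).image σ))
  have hW : Module.finrank ℂ W = j + 1 := by
    rw [OrthonormalBasis.finrank_span_image, card_image_of_injective _ σ.injective,
      Fin.card_Ici, Fin.val_rev]
    omega
  have hVW : 0 < Module.finrank ℂ ↥(V ⊓ W) := by
    have := finrank_add_le_finrank_inf_add V W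
    rw [finrank_euclideanSpace_fin] at this
    omega
  obtain ⟨⟨x, hxV, hxW⟩, hx0⟩ := Module.finrank_pos_iff_exists_ne_zero.1 hVW
  have hlow : sv C j * ‖x‖ ≤ ‖toEuclideanLin C x‖ := by
    refine le_norm_toEuclideanLin_of_mem_span C (fun i hi => ?_) hxW
    obtain ⟨p, hp, rfl⟩ := mem_image.1 hi
    rw [sq_sv]
    exact Tuple.monotone_sort (gramEigenvalues C) (mem_Ici.1 hp)
  have hxpos : 0 < ‖x‖ := norm_pos_iff.2 fun h => hx0 (Subtype.ext h)
  exact le_of_mul_le_mul_right (hlow.trans (hc x hxV)) hxpos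

theorem sv_mul_le (M N : Matrix (Fin m) (Fin m) ℂ) {i k j : Fin m} (hj : (i : ℕ) + k = j) :
    sv (M * N) j ≤ sv M i * sv N k := by
  obtain ⟨VM, hVM, hM⟩ := exists_finrank_le_norm_le_sv M i
  obtain ⟨VN, hVN, hN⟩ := exists_finrank_le_norm_le_sv N k
  refine sv_le_of_forall_norm_le (M * N) j (VN ⊓ VM.comap (toEuclideanLin N)) ?_ fun x hx => ?_
  · have h1 := finrank_add_le_finrank_inf_add VN (VM.comap (toEuclideanLin N))
    have h2 := finrank_le_finrank_comap (toEuclideanLin N) VM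
    rw [finrank_euclideanSpace_fin] at h1
    omega
  · calc ‖toEuclideanLin (M * N) x‖ = ‖toEuclideanLin M (toEuclideanLin N x)‖ := by
          rw [toEuclideanLin_mul_apply]
      _ ≤ sv M i * ‖toEuclideanLin N x‖ := hM _ hx.2
      _ ≤ sv M i * (sv N k * ‖x‖) := mul_le_mul_of_nonneg_left (hN x hx.1) (sv_nonneg M i)
      _ = sv M i * sv N k * ‖x‖ := (mul_assoc _ _ _).symm

end SingularValues

theorem conjTranspose_blk_mul_blk {n : ℕ} (A B : Matrix (Fin n) (Fin n) ℂ) :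
    (blk A 0 0 B)ᴴ * blk A 0 0 B = blk (Aᴴ * A) 0 0 (Bᴴ * B) := by
  simp [blk, fromBlocks_conjTranspose, fromBlocks_multiply]

theorem charpoly_conjTranspose_blk_mul_blk {n : ℕ} (A B : Matrix (Fin n) (Fin n) ℂ) :
    ((blk A 0 0 B)ᴴ * blk A 0 0 B).charpoly = (Aᴴ * A).charpoly * (Bᴴ * B).charpoly := by
  rw [conjTranspose_blk_mul_blk, blk, charpoly_reindex, charpoly_fromBlocks_zero₁₂]

theorem sv_product_opNorm {n : ℕ} (A B X : Matrix (Fin n) (Fin n) ℂ) :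
    ∀ j : Fin n, sv (A * X * Bᴴ) j ≤
      opNorm X * (sv (blk A 0 0 B) (Fin.castAdd n j)) ^ 2 := by
  intro j
  set c := sv (blk A 0 0 B) (Fin.castAdd n j)
  obtain ⟨i, k, hik, hAi, hBk⟩ := exists_add_eq_le_of_map_eq_add (sv_antitone _)
    (sv_antitone A) (sv_antitone B)
    (map_sv_eq_of_charpoly_eq_mul (charpoly_conjTranspose_blk_mul_blk A B)) j
  have hX : 0 ≤ opNorm X := (sv_nonneg X j).trans (sv_le_opNorm X j)
  have hXB : sv (X * Bᴴ) k ≤ opNorm X * sv B k := by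
    rw [← sv_conjTranspose B]
    exact (sv_mul_le X Bᴴ (i := ⟨0, j.pos⟩) (zero_add _)).trans
      (mul_le_mul_of_nonneg_right (sv_le_opNorm X _) (sv_nonneg _ _))
  calc sv (A * X * Bᴴ) j ≤ sv A i * sv (X * Bᴴ) k := by
        rw [mul_assoc]
        exact sv_mul_le A (X * Bᴴ) hik
    _ ≤ c * (opNorm X * c) :=
        mul_le_mul hAi (hXB.trans (mul_le_mul_of_nonneg_left hBk hX)) (sv_nonneg _ _)
          (sv_nonneg _ _)
    _ = opNorm X * c ^ 2 := by ring
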